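/- Let f : S → E be a strictly increasing function from a set S of epsilon numbers into the epsilon numbers, and let x, y be ordinals all of whose hereditary epsilon-number constituents lie in S. Then x < y if and only if x[f] < y[f], where x[f] denotes the result of simultaneously substituting each epsilon number e occurring in the Cantor normal form of x (hereditarily) by f(e). -/

import Mathlib

open Ordinal

/-- An ordinal is an epsilon number if it is a fixed point of `ω ^ ·`. -/
def IsEpsilon (x : Ordinal.{0}) : Prop := ω ^ x = x

theorem cnf_fst_lt {x : Ordinal.{0}} (h : ¬ ω ^ x = x) {p : Ordinal × Ordinal}
    (hp : p ∈ CNF ω x) : p.1 < x := by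
  have hx : x ≠ 0 := by
    rintro rfl
    simp [Ordinal.CNF.zero_right] at hp
  have h1 : p.1 ≤ Ordinal.log ω x := Ordinal.CNF.fst_le_log hp
  have h2 : Ordinal.log ω x < x := by
    rcases lt_or_eq_of_le (Ordinal.log_le_self ω x) with h' | h'
    · exact h'
    · exfalso
      have hle := Ordinal.opow_log_le_self ω hx
      rw [h'] at hle
      exact h (le_antisymm hle (Ordinal.right_le_opow x one_lt_omega0))
  exact lt_of_le_of_lt h1 h2

open scoped Classical in
/-- The set of epsilon numbers occurring hereditarily in the Cantor normal form of `x`. -/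
noncomputable def Ep (x : Ordinal.{0}) : Set Ordinal.{0} :=
  if h : ω ^ x = x then {x}
  else ⋃ p : {q // q ∈ CNF ω x}, Ep p.1.1
termination_by x
decreasing_by exact cnf_fst_lt h p.2

open scoped Classical in
/-- Simultaneous substitution of the epsilon numbers occurring hereditarily in the
Cantor normal form of `x` by their values under `f`. -/
noncomputable def subst (f : Ordinal.{0} → Ordinal.{0}) (x : Ordinal.{0}) : Ordinal.{0} :=
  if h : ω ^ x = x then f x
  else (((CNF ω x).attach).map (fun p => ω ^ subst f p.1.1 * p.1.2)).sum
termination_by x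
decreasing_by exact cnf_fst_lt h p.2

/-! Substitution acts termwise on Cantor normal forms, and Cantor normal forms compare
lexicographically. So `x < y` and `x[f] < y[f]` are the same lexicographic comparison as soon as
substitution preserves the order between the exponents involved. That is the claim itself for
smaller pairs, where `(a, b)` with `a < b` is measured by `(b, a)`: the exponents of a
non-epsilon `z` are below `z` and an epsilon number `e` is its own only exponent, so the only pair
that does not reduce is one of two epsilon numbers, where `x[f] = f x` and `f` is increasing. -/

theorem List.Lex.map_of_forall_mem {α β : Type*} {r : α → α → Prop} {s : β → β → Prop}
    {φ : α → β} {l₁ l₂ : List α} (hφ : ∀ a ∈ l₁, ∀ b ∈ l₂, r a b → s (φ a) (φ b))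
    (h : List.Lex r l₁ l₂) : List.Lex s (l₁.map φ) (l₂.map φ) := by
  induction h with
  | nil => exact .nil
  | cons _ ih =>
    exact .cons (ih fun a ha b hb => hφ a (.tail _ ha) b (.tail _ hb))
  | rel hab => exact .rel (hφ _ List.mem_cons_self _ List.mem_cons_self hab)

universe u

namespace Ordinal

noncomputable def cnfEval (b : Ordinal.{u}) (l : List (Ordinal.{u} × Ordinal.{u})) : Ordinal.{u} :=
  l.foldr (fun p r => b ^ p.1 * p.2 + r) 0

def IsCNFList (b : Ordinal.{u}) (l : List (Ordinal.{u} × Ordinal.{u})) : Prop :=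
  l.Pairwise (fun p q => q.1 < p.1) ∧ ∀ p ∈ l, 0 < p.2 ∧ p.2 < b

variable {b : Ordinal.{u}}

@[simp]
theorem cnfEval_nil : cnfEval b [] = 0 := rfl

@[simp]
theorem cnfEval_cons (p : Ordinal.{u} × Ordinal.{u}) (l : List (Ordinal.{u} × Ordinal.{u})) :
    cnfEval b (p :: l) = b ^ p.1 * p.2 + cnfEval b l := rfl

theorem cnfEval_CNF (b o : Ordinal.{u}) : cnfEval b (CNF b o) = o :=
  CNF.foldr b o

theorem isCNFList_CNF (hb : 1 < b) (o : Ordinal.{u}) : IsCNFList b (CNF b o) := by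
  refine ⟨?_, fun p hp => ⟨CNF.snd_pos hp, CNF.snd_lt hb hp⟩⟩
  simpa [List.sortedGT_iff_pairwise, List.pairwise_map] using CNF.sortedGT b o

namespace IsCNFList

variable {l : List (Ordinal.{u} × Ordinal.{u})}

theorem of_cons {p : Ordinal.{u} × Ordinal.{u}} (h : IsCNFList b (p :: l)) : IsCNFList b l :=
  ⟨h.1.of_cons, fun q hq => h.2 q (.tail _ hq)⟩

theorem map_fst (h : IsCNFList b l) {g : Ordinal.{u} → Ordinal.{u}}
    (hg : ∀ p ∈ l, ∀ q ∈ l, p.1 < q.1 → g p.1 < g q.1) :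
    IsCNFList b (l.map fun p => (g p.1, p.2)) := by
  refine ⟨List.pairwise_map.2 (h.1.imp_of_mem fun hp hq hqp => hg _ hq _ hp hqp), ?_⟩
  simpa only [List.mem_map, forall_exists_index, and_imp, forall_apply_eq_imp_iff₂] using h.2

theorem cnfEval_lt_opow (h : IsCNFList b l) (hb : 0 < b) {e : Ordinal.{u}}
    (he : ∀ p ∈ l, p.1 < e) : cnfEval b l < b ^ e := by
  induction l generalizing e with
  | nil => exact opow_pos e hb
  | cons p l ih =>
    exact opow_mul_add_lt_opow (h.2 p List.mem_cons_self).2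
      (ih h.of_cons fun q hq => List.rel_of_pairwise_cons h.1 hq) (he p List.mem_cons_self)

theorem cnfEval_lt_cnfEval_of_lex {l₁ l₂ : List (Ordinal.{u} × Ordinal.{u})}
    (h₁ : IsCNFList b l₁) (h₂ : IsCNFList b l₂)
    (h : List.Lex (Prod.Lex (· < ·) (· < ·)) l₁ l₂) : cnfEval b l₁ < cnfEval b l₂ := by
  induction h with
  | @nil q l₂ =>
    have hq := h₂.2 q List.mem_cons_self
    exact opow_mul_add_pos hq.2.pos.ne' _ hq.1.ne' _
  | cons _ ih =>
    exact (add_lt_add_iff_left _).2 (ih h₁.of_cons h₂.of_cons)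
  | @rel p l₁ q l₂ hpq =>
    have hp := h₁.2 p List.mem_cons_self
    have hq := h₂.2 q List.mem_cons_self
    have hb : 0 < b := hp.1.trans hp.2
    rcases Prod.lex_def.1 hpq with hlt | ⟨heq, hlt⟩
    · calc cnfEval b (p :: l₁) < b ^ q.1 := h₁.cnfEval_lt_opow hb fun r hr =>
              (List.mem_cons.1 hr).elim (· ▸ hlt)
                fun hr => (List.rel_of_pairwise_cons h₁.1 hr).trans hlt
        _ ≤ b ^ q.1 * q.2 := le_mul_left _ hq.1
        _ ≤ cnfEval b (q :: l₂) := le_self_add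
    · calc cnfEval b (p :: l₁) < b ^ p.1 * q.2 := opow_mul_add_lt_opow_mul
              (h₁.of_cons.cnfEval_lt_opow hb fun r hr => List.rel_of_pairwise_cons h₁.1 hr) hlt
        _ ≤ cnfEval b (q :: l₂) := heq ▸ le_self_add

theorem cnfEval_lt_cnfEval_iff_lex {l₁ l₂ : List (Ordinal.{u} × Ordinal.{u})}
    (h₁ : IsCNFList b l₁) (h₂ : IsCNFList b l₂) :
    cnfEval b l₁ < cnfEval b l₂ ↔ List.Lex (Prod.Lex (· < ·) (· < ·)) l₁ l₂ := by
  refine ⟨fun h => ?_, cnfEval_lt_cnfEval_of_lex h₁ h₂⟩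
  rcases trichotomous_of (List.Lex (Prod.Lex (· < ·) (· < ·))) l₁ l₂ with hl | rfl | hl
  · exact hl
  · exact absurd h (lt_irrefl _)
  · exact absurd h (cnfEval_lt_cnfEval_of_lex h₂ h₁ hl).not_gt

end IsCNFList

end Ordinal

theorem CNF_omega0_of_isEpsilon {x : Ordinal.{0}} (h : IsEpsilon x) : CNF ω x = [(x, 1)] := by
  have hx : x ≠ 0 := by
    rintro rfl
    simp [IsEpsilon] at h
  have hlog : log ω x = x := by
    conv_lhs => rw [← h]
    exact log_opow one_lt_omega0 x
  rw [CNF.ne_zero hx, hlog, h, div_self hx, mod_self, CNF.zero_right]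

theorem fst_eq_or_lt_of_mem_CNF_omega0 {x : Ordinal.{0}} {p : Ordinal × Ordinal}
    (hp : p ∈ CNF ω x) : (IsEpsilon x ∧ p.1 = x) ∨ (¬ IsEpsilon x ∧ p.1 < x) := by
  by_cases h : IsEpsilon x
  · rw [CNF_omega0_of_isEpsilon h, List.mem_singleton] at hp
    exact .inl ⟨h, by rw [hp]⟩
  · exact .inr ⟨h, cnf_fst_lt h hp⟩

theorem lt_of_mem_CNF_omega0_of_fst_lt {x : Ordinal.{0}} {p q : Ordinal × Ordinal}
    (hp : p ∈ CNF ω x) (hq : q ∈ CNF ω x) (hpq : p.1 < q.1) : q.1 < x := by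
  rcases fst_eq_or_lt_of_mem_CNF_omega0 hq with ⟨h, hqx⟩ | ⟨-, hqx⟩
  · rcases fst_eq_or_lt_of_mem_CNF_omega0 hp with ⟨-, hpx⟩ | ⟨h', -⟩
    · exact absurd (hpx.trans hqx.symm) hpq.ne
    · exact absurd h h'
  · exact hqx

theorem Ep_of_isEpsilon {x : Ordinal.{0}} (h : IsEpsilon x) : Ep x = {x} := by
  rw [Ep, dif_pos (show ω ^ x = x from h)]

theorem mem_Ep_self {x : Ordinal.{0}} (h : IsEpsilon x) : x ∈ Ep x := by
  rw [Ep_of_isEpsilon h]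
  rfl

theorem Ep_subset_of_mem_CNF {x : Ordinal.{0}} {p : Ordinal × Ordinal} (hp : p ∈ CNF ω x) :
    Ep p.1 ⊆ Ep x := by
  by_cases h : IsEpsilon x
  · rw [CNF_omega0_of_isEpsilon h, List.mem_singleton] at hp
    rw [hp]
  · conv_rhs => rw [Ep, dif_neg (show ¬ ω ^ x = x from h)]
    exact Set.subset_iUnion (fun q : {q // q ∈ CNF ω x} => Ep q.1.1) ⟨p, hp⟩

theorem subst_of_isEpsilon (f : Ordinal.{0} → Ordinal.{0}) {x : Ordinal.{0}} (h : IsEpsilon x) :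
    subst f x = f x := by
  rw [subst, dif_pos (show ω ^ x = x from h)]

theorem subst_eq_cnfEval (f : Ordinal.{0} → Ordinal.{0}) {x : Ordinal.{0}}
    (hfx : IsEpsilon x → IsEpsilon (f x)) :
    subst f x = cnfEval ω ((CNF ω x).map fun p => (subst f p.1, p.2)) := by
  by_cases h : IsEpsilon x
  · simp [CNF_omega0_of_isEpsilon h, subst_of_isEpsilon f h, show ω ^ f x = f x from hfx h]
  · rw [subst, dif_neg (show ¬ ω ^ x = x from h),
      List.attach_map_val (f := fun p : Ordinal × Ordinal => ω ^ subst f p.1 * p.2)]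
    induction CNF ω x with
    | nil => rfl
    | cons p l ih => simp [ih]

section

variable {S : Set Ordinal.{0}} {f : Ordinal.{0} → Ordinal.{0}}

theorem subst_lt_subst (hfE : ∀ e ∈ S, IsEpsilon (f e)) (hf : StrictMonoOn f S)
    {x y : Ordinal.{0}} (hx : Ep x ⊆ S) (hy : Ep y ⊆ S) (hxy : x < y) :
    subst f x < subst f y := by
  by_cases hε : IsEpsilon x ∧ IsEpsilon y
  · rw [subst_of_isEpsilon f hε.1, subst_of_isEpsilon f hε.2]
    exact hf (hx (mem_Ep_self hε.1)) (hy (mem_Ep_self hε.2)) hxy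
  have ih {a b : Ordinal.{0}} (ha : Ep a ⊆ S) (hb : Ep b ⊆ S) (hab : a < b)
      (hdec : b < y ∨ b = y ∧ a < x) : subst f a < subst f b :=
    subst_lt_subst hfE hf ha hb hab
  have within {z : Ordinal.{0}} (hzy : z ≤ y) (hz : Ep z ⊆ S) :
      ∀ p ∈ CNF ω z, ∀ q ∈ CNF ω z, p.1 < q.1 → subst f p.1 < subst f q.1 :=
    fun p hp q hq hpq => ih ((Ep_subset_of_mem_CNF hp).trans hz)
      ((Ep_subset_of_mem_CNF hq).trans hz) hpq
      (.inl ((lt_of_mem_CNF_omega0_of_fst_lt hp hq hpq).trans_le hzy))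
  have across : ∀ p ∈ CNF ω x, ∀ q ∈ CNF ω y, Prod.Lex (· < ·) (· < ·) p q →
      Prod.Lex (· < ·) (· < ·) (subst f p.1, p.2) (subst f q.1, q.2) := by
    intro p hp q hq hpq
    rcases Prod.lex_def.1 hpq with hlt | ⟨heq, hlt⟩
    · refine Prod.Lex.left _ _ (ih ((Ep_subset_of_mem_CNF hp).trans hx)
        ((Ep_subset_of_mem_CNF hq).trans hy) hlt ?_)
      rcases fst_eq_or_lt_of_mem_CNF_omega0 hq with ⟨hye, hqy⟩ | ⟨-, hqy⟩
      · rcases fst_eq_or_lt_of_mem_CNF_omega0 hp with ⟨hxe, -⟩ | ⟨-, hpx⟩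
        · exact absurd ⟨hxe, hye⟩ hε
        · exact .inr ⟨hqy, hpx⟩
      · exact .inl hqy
    · exact Prod.lex_def.2 (.inr ⟨congrArg (subst f) heq, hlt⟩)
  have hxE : IsEpsilon x → IsEpsilon (f x) := fun h => hfE x (hx (mem_Ep_self h))
  have hyE : IsEpsilon y → IsEpsilon (f y) := fun h => hfE y (hy (mem_Ep_self h))
  have hlex := ((isCNFList_CNF one_lt_omega0 x).cnfEval_lt_cnfEval_iff_lex
    (isCNFList_CNF one_lt_omega0 y)).1 (by rwa [cnfEval_CNF, cnfEval_CNF])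
  rw [subst_eq_cnfEval f hxE, subst_eq_cnfEval f hyE,
    ((isCNFList_CNF one_lt_omega0 x).map_fst (within hxy.le hx)).cnfEval_lt_cnfEval_iff_lex
      ((isCNFList_CNF one_lt_omega0 y).map_fst (within le_rfl hy))]
  exact hlex.map_of_forall_mem across
termination_by (y, x)
decreasing_by exact Prod.lex_def.2 hdec

theorem subst_strictMonoOn (hfE : ∀ e ∈ S, IsEpsilon (f e)) (hf : StrictMonoOn f S) :
    StrictMonoOn (subst f) {x | Ep x ⊆ S} :=
  fun _ hx _ hy hxy => subst_lt_subst hfE hf hx hy hxy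

end

theorem stmt0_general (S : Set Ordinal.{0}) (f : Ordinal → Ordinal)
    (hfE : ∀ e ∈ S, IsEpsilon (f e))
    (hf : StrictMonoOn f S)
    (x y : Ordinal) (hx : Ep x ⊆ S) (hy : Ep y ⊆ S) :
    x < y ↔ subst f x < subst f y :=
  ((subst_strictMonoOn hfE hf).lt_iff_lt hx hy).symm

theorem stmt0 (S : Set Ordinal.{0}) (f : Ordinal → Ordinal)
    (hS : ∀ e ∈ S, IsEpsilon e) (hfE : ∀ e ∈ S, IsEpsilon (f e))
    (hf : StrictMonoOn f S)
    (x y : Ordinal) (hx : Ep x ⊆ S) (hy : Ep y ⊆ S) :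
    x < y ↔ subst f x < subst f y :=
  stmt0_general S f hfE hf x y hx hy
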